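/- The canonicalization of an assertion is semantically equivalent to the original assertion: for any assertion P = ⋁_{i∈I} ∃x⃗ᵢ. ψᵢ and program C (with the bound variables x⃗ᵢ not free in C), cano(P, C) is equivalent to P. -/
import Mathlib


/-- Variables -/
abbrev Var := String
/-- Locations -/
abbrev Loc := ℕ
/-- Values -/
abbrev Val := ℕ

/-- Terms: variables, the constant null, and numeric constants. -/
inductive Term where
  | var (x : Var)
  | null
  | const (n : ℕ)
deriving DecidableEq

/-- Stores: total functions from variables to values. -/
abbrev Store := Var → Val

/-- Heaps: partial functions from locations to values or ⊥.
`none` = not in domain, `some none` = ⊥ (deallocated), `some (some v)` = value `v`. -/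
abbrev Heap := Loc → Option (Option Val)

def Term.eval (s : Store) : Term → Val
  | .var x => s x
  | .null => 0
  | .const n => n

def Store.upd (s : Store) (x : Var) (v : Val) : Store :=
  fun y => if y = x then v else s y

def Heap.emptyH : Heap := fun _ => none

def Heap.dom (h : Heap) : Set Loc := {l | h l ≠ none}

def Heap.domPos (h : Heap) : Set Loc := {l | ∃ v : Val, h l = some (some v)}

def Heap.disj (h₁ h₂ : Heap) : Prop := Heap.dom h₁ ∩ Heap.dom h₂ = ∅

def Heap.comp (h₁ h₂ : Heap) : Heap :=
  fun l => match h₁ l with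
    | some v => some v
    | none => h₂ l

def Heap.upd (h : Heap) (l : Loc) (v : Option Val) : Heap :=
  fun l' => if l' = l then some v else h l'

def Heap.single (l : Loc) (v : Option Val) : Heap :=
  fun l' => if l' = l then some v else none

/-- Atomic formulas of quantifier-free symbolic heaps. -/
inductive Atom where
  | emp
  | pt (t u : Term)      -- t ↦ u
  | npt (t : Term)       -- t ↛  (negative heap assertion)
  | eq (t u : Term)      -- t ≈ u
  | neq (t u : Term)     -- t ≉ u
deriving DecidableEq

/-- Quantifier-free symbolic heap: a ∗-conjunction of atoms. -/
abbrev SymHeap := List Atom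

def Atom.sat (s : Store) (h : Heap) : Atom → Prop
  | .emp => h = Heap.emptyH
  | .pt t u => h = Heap.single (t.eval s) (some (u.eval s))
  | .npt t => h = Heap.single (t.eval s) none
  | .eq t u => t.eval s = u.eval s ∧ h = Heap.emptyH
  | .neq t u => t.eval s ≠ u.eval s ∧ h = Heap.emptyH

def SymHeap.sat (s : Store) (h : Heap) : SymHeap → Prop
  | [] => h = Heap.emptyH
  | a :: ψ => ∃ h₁ h₂, Heap.disj h₁ h₂ ∧ h = Heap.comp h₁ h₂ ∧
      Atom.sat s h₁ a ∧ SymHeap.sat s h₂ ψ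

def Term.subst (t : Term) (x : Var) (r : Term) : Term :=
  match t with
  | .var y => if y = x then r else .var y
  | t => t

def Atom.subst (a : Atom) (x : Var) (r : Term) : Atom :=
  match a with
  | .emp => .emp
  | .pt t u => .pt (t.subst x r) (u.subst x r)
  | .npt t => .npt (t.subst x r)
  | .eq t u => .eq (t.subst x r) (u.subst x r)
  | .neq t u => .neq (t.subst x r) (u.subst x r)

def SymHeap.subst (ψ : SymHeap) (x : Var) (r : Term) : SymHeap :=
  ψ.map (Atom.subst · x r)

def Term.fv : Term → Set Var
  | .var x => {x}
  | _ => ∅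

def Atom.fv : Atom → Set Var
  | .emp => ∅
  | .pt t u => t.fv ∪ u.fv
  | .npt t => t.fv
  | .eq t u => t.fv ∪ u.fv
  | .neq t u => t.fv ∪ u.fv

def SymHeap.fv (ψ : SymHeap) : Set Var := ⋃ a ∈ ψ, Atom.fv a

/-- Commands of the ISL programming language. -/
inductive Com where
  | skip
  | assign (x : Var) (t : Term)       -- x := t
  | havoc (x : Var)                   -- x := *
  | assm (B : SymHeap)                -- assume(B), B a pure formula
  | localv (x : Var) (C : Com)        -- local x in C
  | seq (C₁ C₂ : Com)
  | choice (C₁ C₂ : Com)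
  | star (C : Com)
  | alloc (x : Var)                   -- x := alloc()
  | free (x : Var)
  | load (x y : Var)                  -- x := [y]
  | store (x : Var) (t : Term)        -- [x] := t
  | error

/-- Exit conditions. -/
inductive ExitCond where
  | ok
  | er
deriving DecidableEq

abbrev State := Store × Heap
abbrev ISLRel := State → State → Prop

def relComp (R₁ R₂ : ISLRel) : ISLRel := fun a c => ∃ b, R₁ a b ∧ R₂ b c

def relIter (R : ISLRel) : ℕ → ISLRel
  | 0 => fun a b => a = b
  | n + 1 => relComp R (relIter R n)

/-- `s ⊨ B` for a pure formula `B`: satisfaction in the empty heap. -/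
def pureSat (s : Store) (B : SymHeap) : Prop := SymHeap.sat s Heap.emptyH B

/-- A pure formula: a ∗-conjunction of (in)equalities. -/
def isPure (B : SymHeap) : Prop :=
  ∀ a ∈ B, ∃ t u, a = Atom.eq t u ∨ a = Atom.neq t u

/-- Denotational semantics ⟦C⟧_ε of ISL commands. -/
def sem : Com → ExitCond → ISLRel
  | .skip, .ok => fun σ σ' => σ' = σ
  | .skip, .er => fun _ _ => False
  | .assign x t, .ok => fun σ σ' => σ' = (Store.upd σ.1 x (Term.eval σ.1 t), σ.2)
  | .assign _ _, .er => fun _ _ => False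
  | .havoc x, .ok => fun σ σ' => ∃ v : Val, σ' = (Store.upd σ.1 x v, σ.2)
  | .havoc _, .er => fun _ _ => False
  | .assm B, .ok => fun σ σ' => σ' = σ ∧ pureSat σ.1 B
  | .assm _, .er => fun _ _ => False
  | .localv x C, ε => fun σ σ' =>
      ∃ v v' : Val, sem C ε (Store.upd σ.1 x v, σ.2) (Store.upd σ'.1 x v', σ'.2) ∧
        σ.1 x = σ'.1 x
  | .seq C₁ C₂, .ok => relComp (sem C₁ .ok) (sem C₂ .ok)
  | .seq C₁ C₂, .er => fun σ σ' =>
      sem C₁ .er σ σ' ∨ relComp (sem C₁ .ok) (sem C₂ .er) σ σ'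
  | .choice C₁ C₂, ε => fun σ σ' => sem C₁ ε σ σ' ∨ sem C₂ ε σ σ'
  | .star C, .ok => fun σ σ' => ∃ n, relIter (sem C .ok) n σ σ'
  | .star C, .er => fun σ σ' => ∃ n, relComp (relIter (sem C .ok) n) (sem C .er) σ σ'
  | .alloc x, .ok => fun σ σ' =>
      ∃ (l : Loc) (v : Val), (σ.2 l = none ∨ σ.2 l = some none) ∧
        σ' = (Store.upd σ.1 x l, Heap.upd σ.2 l (some v))
  | .alloc _, .er => fun _ _ => False
  | .free x, .ok => fun σ σ' =>
      σ.1 x ∈ Heap.domPos σ.2 ∧ σ' = (σ.1, Heap.upd σ.2 (σ.1 x) none)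
  | .free x, .er => fun σ σ' => σ.1 x ∉ Heap.domPos σ.2 ∧ σ' = σ
  | .load x y, .ok => fun σ σ' =>
      ∃ v : Val, σ.2 (σ.1 y) = some (some v) ∧ σ' = (Store.upd σ.1 x v, σ.2)
  | .load _ y, .er => fun σ σ' => σ.1 y ∉ Heap.domPos σ.2 ∧ σ' = σ
  | .store x t, .ok => fun σ σ' =>
      σ.1 x ∈ Heap.domPos σ.2 ∧ σ' = (σ.1, Heap.upd σ.2 (σ.1 x) (some (Term.eval σ.1 t)))
  | .store x _, .er => fun σ σ' => σ.1 x ∉ Heap.domPos σ.2 ∧ σ' = σ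
  | .error, .ok => fun _ _ => False
  | .error, .er => fun σ σ' => σ' = σ

/-- Free variables of a command. -/
def Com.fv : Com → Set Var
  | .skip => ∅
  | .assign x t => {x} ∪ Term.fv t
  | .havoc x => {x}
  | .assm B => SymHeap.fv B
  | .localv x C => Com.fv C \ {x}
  | .seq C₁ C₂ => Com.fv C₁ ∪ Com.fv C₂
  | .choice C₁ C₂ => Com.fv C₁ ∪ Com.fv C₂
  | .star C => Com.fv C
  | .alloc x => {x}
  | .free x => {x}
  | .load x y => {x} ∪ {y}
  | .store x t => {x} ∪ Term.fv t
  | .error => ∅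

/-- Variables modified by a command. -/
def Com.mod : Com → Set Var
  | .skip => ∅
  | .assign x _ => {x}
  | .havoc x => {x}
  | .assm _ => ∅
  | .localv x C => Com.mod C \ {x}
  | .seq C₁ C₂ => Com.mod C₁ ∪ Com.mod C₂
  | .choice C₁ C₂ => Com.mod C₁ ∪ Com.mod C₂
  | .star C => Com.mod C
  | .alloc x => {x}
  | .free _ => ∅
  | .load x _ => {x}
  | .store _ _ => ∅
  | .error => ∅

/-- Semantic weakest postcondition. -/
def WPO (P : State → Prop) (C : Com) (ε : ExitCond) : Set State :=
  {σ' | ∃ σ, P σ ∧ sem C ε σ σ'}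

/-- Satisfaction of a symbolic heap as a predicate on states. -/
def satSH (ψ : SymHeap) : State → Prop := fun σ => SymHeap.sat σ.1 σ.2 ψ

/-- Satisfaction of an existentially quantified symbolic heap `∃ x⃗. ψ`. -/
def satEx (s : Store) (h : Heap) : List Var → SymHeap → Prop
  | [], ψ => SymHeap.sat s h ψ
  | x :: xs, ψ => ∃ v : Val, satEx (Store.upd s x v) h xs ψ

/-- Terms over a set of variables, together with null. -/
def termsOf (V : Set Var) : Set Term := {Term.null} ∪ (Term.var '' V)

/-- Canonical forms: symbolic heaps containing `t ≈ u` or `t ≉ u`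
for every pair of terms over `V ∪ {null}`. -/
def CFsh (V : Set Var) : Set SymHeap :=
  {ψ | ∀ t ∈ termsOf V, ∀ u ∈ termsOf V, Atom.eq t u ∈ ψ ∨ Atom.neq t u ∈ ψ}

/-- Complete case analyses `Π(V)`: pure formulas deciding every pair of terms
over `V ∪ {null}`, with the equality part reflexive and symmetric. -/
def PiCA (V : Set Var) : Set SymHeap :=
  {π | (∀ a ∈ π, ∃ t ∈ termsOf V, ∃ u ∈ termsOf V, a = Atom.eq t u ∨ a = Atom.neq t u)
    ∧ (∀ t ∈ termsOf V, ∀ u ∈ termsOf V,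
        (Atom.eq t u ∈ π ∧ Atom.neq t u ∉ π) ∨ (Atom.neq t u ∈ π ∧ Atom.eq t u ∉ π))
    ∧ (∀ t ∈ termsOf V, Atom.eq t t ∈ π)
    ∧ (∀ t u, Atom.eq t u ∈ π → Atom.eq u t ∈ π)}

def SymHeap.satisfiable (ψ : SymHeap) : Prop := ∃ s h, SymHeap.sat s h ψ

/-- Case analysis `CA(ψ, C)`. -/
def CA (ψ : SymHeap) (C : Com) : Set SymHeap :=
  {φ | ∃ π ∈ PiCA (SymHeap.fv ψ ∪ Com.fv C), φ = π ++ ψ ∧ SymHeap.satisfiable φ}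

/-- Validity of ISL triples: `⊨ [P] C [ε : Q]`. -/
def validTriple (P : State → Prop) (C : Com) (ε : ExitCond) (Q : State → Prop) : Prop :=
  ∀ σ', Q σ' → ∃ σ, P σ ∧ sem C ε σ σ'

/-! ### Auxiliary lemmas for `cano_equiv` -/

lemma comp_empty_left (h : Heap) : Heap.comp Heap.emptyH h = h := by
  funext l; simp [Heap.comp, Heap.emptyH]

lemma disj_empty_left (h : Heap) : Heap.disj Heap.emptyH h := by
  simp [Heap.disj, Heap.dom, Heap.emptyH, Set.eq_empty_iff_forall_notMem]

lemma pure_atom_heap {a : Atom} (ha : ∃ t u, a = Atom.eq t u ∨ a = Atom.neq t u)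
    {s : Store} {h : Heap} (hsat : Atom.sat s h a) : h = Heap.emptyH := by
  obtain ⟨t, u, hc | hc⟩ := ha <;> subst hc <;> exact hsat.2

lemma sat_append_iff {π : SymHeap} (hp : isPure π) (ψ : SymHeap) (s : Store) (h : Heap) :
    SymHeap.sat s h (π ++ ψ) ↔ SymHeap.sat s Heap.emptyH π ∧ SymHeap.sat s h ψ := by
  induction π with
  | nil => simp [SymHeap.sat]
  | cons a π ih =>
    have hap : ∃ t u, a = Atom.eq t u ∨ a = Atom.neq t u := hp a (by simp)
    have hpt : isPure π := fun b hb => hp b (by simp [hb])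
    constructor
    · rintro ⟨h₁, h₂, hd, heq, hsa, hrest⟩
      have h1e : h₁ = Heap.emptyH := pure_atom_heap hap hsa
      subst h1e
      have : h = h₂ := by rw [heq, comp_empty_left]
      subst this
      obtain ⟨hπ, hψ⟩ := (ih hpt).mp hrest
      exact ⟨⟨Heap.emptyH, Heap.emptyH, disj_empty_left _,
        (comp_empty_left _).symm, hsa, hπ⟩, hψ⟩
    · rintro ⟨⟨h₁, h₂, hd, heq, hsa, hπ⟩, hψ⟩
      have h1e : h₁ = Heap.emptyH := pure_atom_heap hap hsa
      subst h1e
      have h2e : h₂ = Heap.emptyH := by rw [heq, comp_empty_left]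
      subst h2e
      exact ⟨Heap.emptyH, h, disj_empty_left _, (comp_empty_left _).symm, hsa,
        (ih hpt).mpr ⟨hπ, hψ⟩⟩

lemma sat_pure_of_forall {π : SymHeap} {s : Store}
    (hall : ∀ a ∈ π, Atom.sat s Heap.emptyH a) : SymHeap.sat s Heap.emptyH π := by
  induction π with
  | nil => rfl
  | cons a π ih =>
    exact ⟨Heap.emptyH, Heap.emptyH, disj_empty_left _, (comp_empty_left _).symm,
      hall a (by simp), ih (fun b hb => hall b (by simp [hb]))⟩

lemma term_fv_finite (t : Term) : (Term.fv t).Finite := by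
  cases t <;> simp [Term.fv] <;> exact Set.finite_empty

lemma atom_fv_finite (a : Atom) : (Atom.fv a).Finite := by
  cases a <;>
    first
      | exact Set.finite_empty
      | exact term_fv_finite _
      | exact Set.Finite.union (term_fv_finite _) (term_fv_finite _)

lemma symheap_fv_finite (ψ : SymHeap) : (SymHeap.fv ψ).Finite :=
  Set.Finite.biUnion ψ.finite_toSet (fun a _ => atom_fv_finite a)

lemma com_fv_finite (C : Com) : (Com.fv C).Finite := by
  induction C <;>
    first
      | exact Set.finite_empty
      | exact Set.finite_singleton _
      | exact Set.Finite.union (Set.finite_singleton _) (term_fv_finite _)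
      | exact symheap_fv_finite _
      | (apply Set.Finite.diff; assumption)
      | (apply Set.Finite.union <;> assumption)
      | assumption
      | exact Set.Finite.union (Set.finite_singleton _) (Set.finite_singleton _)

/-- The complete case analysis determined by a store `s` over a list of terms `L`. -/
def mkPi (L : List Term) (s : Store) : SymHeap :=
  (L.product L).map (fun p =>
    if Term.eval s p.1 = Term.eval s p.2 then Atom.eq p.1 p.2 else Atom.neq p.1 p.2)

lemma mem_mkPi_eq {L : List Term} {s : Store} {t u : Term} :
    Atom.eq t u ∈ mkPi L s ↔ t ∈ L ∧ u ∈ L ∧ Term.eval s t = Term.eval s u := by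
  simp only [mkPi, List.mem_map]
  constructor
  · rintro ⟨⟨a, b⟩, hmem, heq⟩
    by_cases hc : Term.eval s a = Term.eval s b <;> simp [hc] at heq
    obtain ⟨rfl, rfl⟩ := heq
    exact ⟨(List.pair_mem_product.mp hmem).1, (List.pair_mem_product.mp hmem).2, hc⟩
  · rintro ⟨ht, hu, hev⟩
    exact ⟨(t, u), List.pair_mem_product.mpr ⟨ht, hu⟩, by simp [hev]⟩

lemma mem_mkPi_neq {L : List Term} {s : Store} {t u : Term} :
    Atom.neq t u ∈ mkPi L s ↔ t ∈ L ∧ u ∈ L ∧ Term.eval s t ≠ Term.eval s u := by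
  simp only [mkPi, List.mem_map]
  constructor
  · rintro ⟨⟨a, b⟩, hmem, heq⟩
    by_cases hc : Term.eval s a = Term.eval s b <;> simp [hc] at heq
    obtain ⟨rfl, rfl⟩ := heq
    exact ⟨(List.pair_mem_product.mp hmem).1, (List.pair_mem_product.mp hmem).2, hc⟩
  · rintro ⟨ht, hu, hev⟩
    exact ⟨(t, u), List.pair_mem_product.mpr ⟨ht, hu⟩, by simp [hev]⟩

lemma mkPi_shape {L : List Term} {s : Store} {a : Atom} (ha : a ∈ mkPi L s) :
    ∃ t ∈ L, ∃ u ∈ L, a = Atom.eq t u ∨ a = Atom.neq t u := by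
  simp only [mkPi, List.mem_map] at ha
  obtain ⟨⟨t, u⟩, hmem, heq⟩ := ha
  refine ⟨t, (List.pair_mem_product.mp hmem).1, u, (List.pair_mem_product.mp hmem).2, ?_⟩
  by_cases hc : Term.eval s t = Term.eval s u <;> simp [hc] at heq <;> simp [← heq]

lemma mkPi_pure (L : List Term) (s : Store) : isPure (mkPi L s) := by
  intro a ha
  obtain ⟨t, _, u, _, hc⟩ := mkPi_shape ha
  exact ⟨t, u, hc⟩

lemma mkPi_sat (L : List Term) (s : Store) : SymHeap.sat s Heap.emptyH (mkPi L s) := by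
  apply sat_pure_of_forall
  intro a ha
  simp only [mkPi, List.mem_map] at ha
  obtain ⟨⟨t, u⟩, _, heq⟩ := ha
  by_cases hc : Term.eval s t = Term.eval s u <;> simp [hc] at heq <;>
    subst heq <;> exact ⟨hc, rfl⟩

lemma mkPi_mem_PiCA {V : Set Var} (hV : V.Finite) (s : Store) :
    mkPi (Term.null :: (hV.toFinset.toList.map Term.var)) s ∈ PiCA V := by
  set L : List Term := Term.null :: (hV.toFinset.toList.map Term.var) with hL
  have hLmem : ∀ t, t ∈ L ↔ t ∈ termsOf V := by
    intro t
    simp [hL, termsOf, Set.mem_image, List.mem_map, Set.Finite.mem_toFinset,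
      eq_comm (a := t)]
  refine ⟨?_, ?_, ?_, ?_⟩
  · intro a ha
    obtain ⟨t, ht, u, hu, hc⟩ := mkPi_shape ha
    exact ⟨t, (hLmem t).mp ht, u, (hLmem u).mp hu, hc⟩
  · intro t ht u hu
    by_cases hc : Term.eval s t = Term.eval s u
    · left
      refine ⟨mem_mkPi_eq.mpr ⟨(hLmem t).mpr ht, (hLmem u).mpr hu, hc⟩, ?_⟩
      intro hn; exact (mem_mkPi_neq.mp hn).2.2 hc
    · right
      refine ⟨mem_mkPi_neq.mpr ⟨(hLmem t).mpr ht, (hLmem u).mpr hu, hc⟩, ?_⟩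
      intro hn; exact hc (mem_mkPi_eq.mp hn).2.2
  · intro t ht
    exact mem_mkPi_eq.mpr ⟨(hLmem t).mpr ht, (hLmem t).mpr ht, rfl⟩
  · intro t u htu
    obtain ⟨ht, hu, hev⟩ := mem_mkPi_eq.mp htu
    exact mem_mkPi_eq.mpr ⟨hu, ht, hev.symm⟩

lemma satEx_append_forward {π : SymHeap} (hp : isPure π) (ψ : SymHeap) :
    ∀ (xs : List Var) (s : Store) (h : Heap), satEx s h xs (π ++ ψ) → satEx s h xs ψ := by
  intro xs
  induction xs with
  | nil => intro s h hs; exact ((sat_append_iff hp ψ s h).mp hs).2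
  | cons x xs ih =>
    rintro s h ⟨v, hv⟩
    exact ⟨v, ih _ h hv⟩

lemma satEx_backward {V : Set Var} (hV : V.Finite) (ψ : SymHeap) :
    ∀ (xs : List Var) (s : Store) (h : Heap), satEx s h xs ψ →
      ∃ π ∈ PiCA V, satEx s h xs (π ++ ψ) ∧ SymHeap.satisfiable (π ++ ψ) := by
  intro xs
  induction xs with
  | nil =>
    intro s h hs
    refine ⟨mkPi (Term.null :: (hV.toFinset.toList.map Term.var)) s, mkPi_mem_PiCA hV s,
      ?_, ?_⟩
    · exact (sat_append_iff (mkPi_pure _ _) ψ s h).mpr ⟨mkPi_sat _ _, hs⟩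
    · exact ⟨s, h, (sat_append_iff (mkPi_pure _ _) ψ s h).mpr ⟨mkPi_sat _ _, hs⟩⟩
  | cons x xs ih =>
    rintro s h ⟨v, hv⟩
    obtain ⟨π, hπ, hsat, hsble⟩ := ih _ h hv
    exact ⟨π, hπ, ⟨v, hsat⟩, hsble⟩

/-- canonicalization is semantically equivalent to the original assertion.
The assertion is `P = ⋁_{i∈I} ∃ x⃗ᵢ. ψᵢ` and
`cano(P, C) = ⋁_{i∈I} ⋁_{φ ∈ CA(ψᵢ, C)} ∃ x⃗ᵢ. φ`. -/
theorem cano_equiv {I : Type} (xs : I → List Var) (ψs : I → SymHeap) (C : Com)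
    (hfresh : ∀ i, ∀ x ∈ xs i, x ∉ Com.fv C) (s : Store) (h : Heap) :
    (∃ i, ∃ φ ∈ CA (ψs i) C, satEx s h (xs i) φ) ↔ (∃ i, satEx s h (xs i) (ψs i)) := by
  constructor
  · rintro ⟨i, φ, ⟨π, hπ, rfl, _⟩, hsat⟩
    have hp : isPure π := fun a ha => by
      obtain ⟨t, _, u, _, hc⟩ := hπ.1 a ha
      exact ⟨t, u, hc⟩
    exact ⟨i, satEx_append_forward hp (ψs i) (xs i) s h hsat⟩
  · rintro ⟨i, hsat⟩
    have hV : (SymHeap.fv (ψs i) ∪ Com.fv C).Finite :=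
      (symheap_fv_finite _).union (com_fv_finite _)
    obtain ⟨π, hπ, hs, hsble⟩ := satEx_backward hV (ψs i) (xs i) s h hsat
    exact ⟨i, π ++ ψs i, ⟨π, hπ, rfl, hsble⟩, hs⟩
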